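/- Let A₁, …, A_m be Hermitian n×n matrices with n ≥ r, and define a₀ = inf { Σ_j ⟨x x* − y y*, A_j⟩_ℝ² / ‖x x* − y y*‖₂² : x, y ∈ ℂ^{n×r}, x x* ≠ y y* }. For z ∈ ℂ^{n×r} with z* z = I_r, let â(z) = min { Σ_j ⟨z w* + w z*, A_j⟩_ℝ² : w ∈ H_z, ‖w‖₂ = 1 }, where H_z is the orthogonal complement in ℂ^{n×r} of {z K : K skew-Hermitian}. Then (1/4) · inf { â(z) : z ∈ ℂ^{n×r}, z* z = I_r } ≤ a₀ ≤ (1/2) · inf { â(z) : z ∈ ℂ^{n×r}, z* z = I_r }. -/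

import Mathlib

/-!
Both bounds compare secants of `β(x) = (⟨x x*, A_j⟩)_j` with its differential at an isometry `z`
(`z* z = 1`): a difference `x x* - y y* = ½ ((x - y)(x + y)* + (x + y)(x - y)*)` and a tangent
vector `z w* + w z*` have the same shape. For a horizontal `w` one has
`‖z w* + w z*‖² = 2 ‖w‖² + 2 ‖z* w‖²`, which lies between `2 ‖w‖²` and `4 ‖w‖²`.

Upper bound: the secant from `z` to `z + t w`, divided by `t`, tends to `z w* + w z*`, and the
quotient defining `a₀` is continuous there.

Lower bound: if `u = x - y` is injective, then `u = z S` with `z* z = 1`, so that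
`x x* - y y*` is half a tangent vector at `z`, represented by a horizontal `w`. A general `u` is
the limit of the injective `u + t E`, `E` the first `r` columns of the identity.
-/

open Matrix Filter
open scoped ComplexOrder

noncomputable def frob {p q : ℕ} (x : Matrix (Fin p) (Fin q) ℂ) : ℝ :=
  Real.sqrt (Matrix.trace (xᴴ * x)).re

noncomputable def rinner {p q : ℕ} (X Y : Matrix (Fin p) (Fin q) ℂ) : ℝ :=
  (Matrix.trace (Xᴴ * Y)).re

/-- The old Mathlib `Matrix.PosSemidef.sqrt` (removed since), with its old definition. -/
noncomputable def Matrix.PosSemidef.sqrt {n 𝕜 : Type*} [Fintype n] [RCLike 𝕜] [DecidableEq n]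
    {A : Matrix n n 𝕜} (hA : Matrix.PosSemidef A) : Matrix n n 𝕜 :=
  hA.1.eigenvectorUnitary.1 * Matrix.diagonal ((↑) ∘ (Real.sqrt ∘ hA.1.eigenvalues)) *
    (star hA.1.eigenvectorUnitary : Matrix n n 𝕜)

noncomputable def nuclear {p q : ℕ} (x : Matrix (Fin p) (Fin q) ℂ) : ℝ :=
  (Matrix.trace (Matrix.posSemidef_conjTranspose_mul_self x).sqrt).re

noncomputable def theta {n r : ℕ} (x : Matrix (Fin n) (Fin r) ℂ) : Matrix (Fin n) (Fin n) ℂ :=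
  (Matrix.posSemidef_self_mul_conjTranspose x).sqrt

noncomputable def psi {n r : ℕ} (x : Matrix (Fin n) (Fin r) ℂ) : Matrix (Fin n) (Fin n) ℂ :=
  frob x • theta x

noncomputable def Dmet {n r : ℕ} (x y : Matrix (Fin n) (Fin r) ℂ) : ℝ :=
  ⨅ U : Matrix.unitaryGroup (Fin r) ℂ, frob (x - y * (U : Matrix (Fin r) (Fin r) ℂ))

noncomputable def dmet {n r : ℕ} (x y : Matrix (Fin n) (Fin r) ℂ) : ℝ :=
  ⨅ U : Matrix.unitaryGroup (Fin r) ℂ,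
    frob (x - y * (U : Matrix (Fin r) (Fin r) ℂ)) * frob (x + y * (U : Matrix (Fin r) (Fin r) ℂ))


/-- `â(z) = min {Σ_j ⟨z w* + w z*, A_j⟩_ℝ² : w ∈ H_z, ‖w‖₂ = 1}`, where `H_z` is the
orthogonal complement in `(ℂ^{n×r}, ⟨·,·⟩_ℝ)` of the vertical space `{z K : K* = −K}`. -/
noncomputable def aHat {n r m : ℕ} (A : Fin m → Matrix (Fin n) (Fin n) ℂ)
    (z : Matrix (Fin n) (Fin r) ℂ) : ℝ :=
  sInf {t : ℝ | ∃ w : Matrix (Fin n) (Fin r) ℂ,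
    (∀ K : Matrix (Fin r) (Fin r) ℂ, Kᴴ = -K →
      (Matrix.trace ((z * K)ᴴ * w)).re = 0) ∧
    frob w = 1 ∧ t = ∑ j, rinner (z * wᴴ + w * zᴴ) (A j) ^ 2}

/-- The squared global lower Lipschitz constant `a₀` of the `β` analysis map. -/
noncomputable def aGlobal {n m : ℕ} (r : ℕ) (A : Fin m → Matrix (Fin n) (Fin n) ℂ) : ℝ :=
  sInf {t : ℝ | ∃ x y : Matrix (Fin n) (Fin r) ℂ, x * xᴴ ≠ y * yᴴ ∧
    t = (∑ j, rinner (x * xᴴ - y * yᴴ) (A j) ^ 2) / frob (x * xᴴ - y * yᴴ) ^ 2}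

open Topology

section Frobenius
variable {p q : ℕ}

lemma rinner_smul_left (c : ℝ) (M N : Matrix (Fin p) (Fin q) ℂ) :
    rinner (c • M) N = c * rinner M N := by
  simp [rinner, Matrix.trace_smul]

lemma rinner_smul_right (c : ℝ) (M N : Matrix (Fin p) (Fin q) ℂ) :
    rinner M (c • N) = c * rinner M N := by
  simp [rinner, Matrix.trace_smul]

lemma rinner_self_nonneg (M : Matrix (Fin p) (Fin q) ℂ) : 0 ≤ rinner M M :=
  (Complex.nonneg_iff.mp (posSemidef_conjTranspose_mul_self M).trace_nonneg).1

lemma rinner_self_eq_zero_iff {M : Matrix (Fin p) (Fin q) ℂ} : rinner M M = 0 ↔ M = 0 := by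
  have him := (Complex.nonneg_iff.mp (posSemidef_conjTranspose_mul_self M).trace_nonneg).2
  rw [← trace_conjTranspose_mul_self_eq_zero_iff, Complex.ext_iff, ← him]
  simp [rinner]

lemma frob_sq (M : Matrix (Fin p) (Fin q) ℂ) : frob M ^ 2 = rinner M M :=
  Real.sq_sqrt (rinner_self_nonneg M)

lemma frob_pos {M : Matrix (Fin p) (Fin q) ℂ} (hM : M ≠ 0) : 0 < frob M :=
  Real.sqrt_pos.mpr <| (rinner_self_nonneg M).lt_of_ne' (mt rinner_self_eq_zero_iff.mp hM)

lemma frob_smul (c : ℝ) (M : Matrix (Fin p) (Fin q) ℂ) : frob (c • M) = |c| * frob M := by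
  show √(rinner (c • M) (c • M)) = |c| * √(rinner M M)
  rw [rinner_smul_left, rinner_smul_right, ← mul_assoc, Real.sqrt_mul' _ (rinner_self_nonneg M),
    Real.sqrt_mul_self_eq_abs]

end Frobenius

lemma re_trace_conjTranspose_mul_eq_zero {ι : Type*} [Fintype ι] {K H : Matrix ι ι ℂ}
    (hK : Kᴴ = -K) (hH : H.IsHermitian) : (trace (Kᴴ * H)).re = 0 := by
  have h : star (trace (Kᴴ * H)) = -trace (Kᴴ * H) := by
    rw [← trace_conjTranspose, conjTranspose_mul, conjTranspose_conjTranspose, hH.eq,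
      trace_mul_comm, hK, Matrix.neg_mul, trace_neg, neg_neg]
  have := congrArg Complex.re h
  simp only [Complex.star_def, Complex.conj_re, Complex.neg_re] at this
  linarith

section Horizontal
variable {n r : ℕ}

def IsHorizontal (z w : Matrix (Fin n) (Fin r) ℂ) : Prop :=
  ∀ K : Matrix (Fin r) (Fin r) ℂ, Kᴴ = -K → (trace ((z * K)ᴴ * w)).re = 0

lemma isHorizontal_iff {z w : Matrix (Fin n) (Fin r) ℂ} :
    IsHorizontal z w ↔ (zᴴ * w).IsHermitian := by
  refine ⟨fun h => ?_, fun h K hK => ?_⟩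
  · set M := zᴴ * w
    set K : Matrix (Fin r) (Fin r) ℂ := (2⁻¹ : ℂ) • (M - Mᴴ)
    have hK : Kᴴ = -K := by simp [K, conjTranspose_smul]; module
    have hsymm : ((2⁻¹ : ℂ) • (M + Mᴴ)).IsHermitian := by
      simp [IsHermitian, conjTranspose_smul, add_comm]
    have hKK : rinner K K = 0 := by
      have hM : M = (2⁻¹ : ℂ) • (M + Mᴴ) + K := by module
      have h0 : (trace (Kᴴ * M)).re = 0 := by
        simpa only [conjTranspose_mul, Matrix.mul_assoc] using h K hK
      rw [hM, Matrix.mul_add, trace_add, Complex.add_re,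
        re_trace_conjTranspose_mul_eq_zero hK hsymm, zero_add] at h0
      exact h0
    have : M - Mᴴ = 0 := by simpa [K] using rinner_self_eq_zero_iff.mp hKK
    exact (sub_eq_zero.mp this).symm
  · rw [conjTranspose_mul, Matrix.mul_assoc]
    exact re_trace_conjTranspose_mul_eq_zero hK h

lemma IsHorizontal.smul {z w : Matrix (Fin n) (Fin r) ℂ} (hw : IsHorizontal z w) (c : ℝ) :
    IsHorizontal z (c • w) := fun K hK => by
  rw [Matrix.mul_smul, trace_smul, Complex.smul_re, hw K hK, smul_zero]

lemma exists_isHorizontal_mul_conjTranspose_add {z : Matrix (Fin n) (Fin r) ℂ}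
    (hz : zᴴ * z = 1) (v : Matrix (Fin n) (Fin r) ℂ) :
    ∃ w, IsHorizontal z w ∧ z * wᴴ + w * zᴴ = z * vᴴ + v * zᴴ := by
  -- remove from `v` its vertical part `z (z* v - (z* v)*) / 2`
  set K : Matrix (Fin r) (Fin r) ℂ := (2⁻¹ : ℂ) • ((zᴴ * v)ᴴ - zᴴ * v)
  have hK : Kᴴ = -K := by simp [K, conjTranspose_smul]; module
  refine ⟨v + z * K, isHorizontal_iff.mpr ?_, ?_⟩
  · rw [Matrix.mul_add, ← Matrix.mul_assoc, hz, Matrix.one_mul]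
    simp [IsHermitian, K, conjTranspose_smul]
    module
  · simp only [conjTranspose_add, conjTranspose_mul, hK, Matrix.mul_add, Matrix.add_mul,
      Matrix.neg_mul, Matrix.mul_neg, Matrix.mul_assoc]
    abel

lemma rinner_conjTranspose_mul_self_le {z : Matrix (Fin n) (Fin r) ℂ} (hz : zᴴ * z = 1)
    (w : Matrix (Fin n) (Fin r) ℂ) : rinner (zᴴ * w) (zᴴ * w) ≤ rinner w w := by
  have hzz (X : Matrix (Fin r) (Fin r) ℂ) : zᴴ * (z * X) = X := by
    rw [← Matrix.mul_assoc, hz, Matrix.one_mul]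
  have key : rinner w w - rinner (zᴴ * w) (zᴴ * w)
      = rinner (w - z * (zᴴ * w)) (w - z * (zᴴ * w)) := by
    simp only [rinner, conjTranspose_sub, conjTranspose_mul, conjTranspose_conjTranspose,
      Matrix.sub_mul, Matrix.mul_sub, Matrix.mul_assoc, hzz, trace_sub, Complex.sub_re]
    ring
  linarith [rinner_self_nonneg (w - z * (zᴴ * w))]

lemma rinner_self_mul_conjTranspose_add {z w : Matrix (Fin n) (Fin r) ℂ} (hz : zᴴ * z = 1)
    (hw : (zᴴ * w).IsHermitian) :
    rinner (z * wᴴ + w * zᴴ) (z * wᴴ + w * zᴴ)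
      = 2 * rinner w w + 2 * rinner (zᴴ * w) (zᴴ * w) := by
  have hwz : wᴴ * z = zᴴ * w := by rw [← hw.eq, conjTranspose_mul, conjTranspose_conjTranspose]
  simp only [rinner, conjTranspose_add, conjTranspose_mul, conjTranspose_conjTranspose,
      Matrix.add_mul, Matrix.mul_add, trace_add, Complex.add_re, hwz, Matrix.mul_assoc]
  rw [trace_mul_comm w, trace_mul_comm z, trace_mul_comm w, trace_mul_comm z]
  simp only [Matrix.mul_assoc, hwz, ← Matrix.mul_assoc zᴴ z, hz, Matrix.one_mul, Matrix.mul_one]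
  rw [← Matrix.mul_assoc wᴴ z, hwz, Matrix.mul_assoc]
  ring

end Horizontal

section AnalysisRatio
variable {n m : ℕ} (A : Fin m → Matrix (Fin n) (Fin n) ℂ)

noncomputable def analysisRatio (M : Matrix (Fin n) (Fin n) ℂ) : ℝ :=
  (∑ j, rinner M (A j) ^ 2) / frob M ^ 2

lemma analysisRatio_nonneg (M : Matrix (Fin n) (Fin n) ℂ) : 0 ≤ analysisRatio A M := by
  unfold analysisRatio; positivity

lemma analysisRatio_smul {t : ℝ} (ht : t ≠ 0) (M : Matrix (Fin n) (Fin n) ℂ) :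
    analysisRatio A (t • M) = analysisRatio A M := by
  simp only [analysisRatio, rinner_smul_left, frob_smul, mul_pow, sq_abs, ← Finset.mul_sum]
  exact mul_div_mul_left _ _ (pow_ne_zero 2 ht)

lemma continuousAt_analysisRatio {M : Matrix (Fin n) (Fin n) ℂ} (hM : M ≠ 0) :
    ContinuousAt (analysisRatio A) M := by
  have hrinner (N : Matrix (Fin n) (Fin n) ℂ) : Continuous fun M => rinner M N := by
    unfold rinner; fun_prop
  have hfrob : Continuous (frob : Matrix (Fin n) (Fin n) ℂ → ℝ) := by
    unfold frob; fun_prop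
  exact ((continuous_finsetSum _ fun j _ => (hrinner (A j)).pow 2).continuousAt).div
    (hfrob.pow 2).continuousAt (pow_pos (frob_pos hM) 2).ne'

lemma le_analysisRatio_of_eventually {c : ℝ} {f : ℝ → Matrix (Fin n) (Fin n) ℂ}
    (hf : ContinuousAt f 0) (hf0 : f 0 ≠ 0)
    (h : ∀ᶠ t in 𝓝[≠] 0, f t ≠ 0 → c ≤ analysisRatio A (f t)) :
    c ≤ analysisRatio A (f 0) := by
  have hne : ∀ᶠ t in 𝓝[≠] (0 : ℝ), f t ≠ 0 :=
    eventually_nhdsWithin_of_eventually_nhds (hf.eventually_ne hf0)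
  exact ge_of_tendsto (((continuousAt_analysisRatio A hf0).comp hf).tendsto.mono_left
    nhdsWithin_le_nhds) (h.mp (hne.mono fun t ht h => h ht))

lemma aGlobal_le_analysisRatio {r : ℕ} {x y : Matrix (Fin n) (Fin r) ℂ}
    (hxy : x * xᴴ ≠ y * yᴴ) : aGlobal r A ≤ analysisRatio A (x * xᴴ - y * yᴴ) :=
  csInf_le ⟨0, by rintro t ⟨x, y, -, rfl⟩; exact analysisRatio_nonneg A _⟩ ⟨x, y, hxy, rfl⟩

end AnalysisRatio

section AHat
variable {n r m : ℕ} (A : Fin m → Matrix (Fin n) (Fin n) ℂ)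

lemma aHat_nonneg (z : Matrix (Fin n) (Fin r) ℂ) : 0 ≤ aHat A z :=
  Real.sInf_nonneg <| by rintro t ⟨w, -, -, rfl⟩; positivity

lemma sInf_aHat_le {z : Matrix (Fin n) (Fin r) ℂ} (hz : zᴴ * z = 1) :
    sInf {t : ℝ | ∃ z : Matrix (Fin n) (Fin r) ℂ, zᴴ * z = 1 ∧ t = aHat A z} ≤ aHat A z :=
  csInf_le ⟨0, by rintro _ ⟨z, -, rfl⟩; exact aHat_nonneg A z⟩ ⟨z, hz, rfl⟩

lemma aHat_le_of_isHorizontal {z w : Matrix (Fin n) (Fin r) ℂ} (hw : IsHorizontal z w)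
    (hw0 : w ≠ 0) :
    aHat A z ≤ (∑ j, rinner (z * wᴴ + w * zᴴ) (A j) ^ 2) / frob w ^ 2 := by
  have hc := frob_pos hw0
  have hunit : frob ((frob w)⁻¹ • w) = 1 := by
    rw [frob_smul, abs_of_pos (inv_pos.mpr hc), inv_mul_cancel₀ hc.ne']
  rw [aHat]
  refine le_trans (csInf_le ?_ ⟨(frob w)⁻¹ • w, hw.smul _, hunit, rfl⟩) (le_of_eq ?_)
  · exact ⟨0, by rintro t ⟨w, -, -, rfl⟩; positivity⟩
  simp only [conjTranspose_smul, star_trivial, Matrix.mul_smul, Matrix.smul_mul, ← smul_add,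
    rinner_smul_left, inv_mul_eq_div, div_pow, Finset.sum_div]

lemma aHat_le_four_mul_analysisRatio {z w : Matrix (Fin n) (Fin r) ℂ} (hz : zᴴ * z = 1)
    (hw : IsHorizontal z w) (hΔ : z * wᴴ + w * zᴴ ≠ 0) :
    aHat A z ≤ 4 * analysisRatio A (z * wᴴ + w * zᴴ) := by
  have hw0 : w ≠ 0 := by rintro rfl; simp at hΔ
  have hnorm : frob (z * wᴴ + w * zᴴ) ^ 2 ≤ 4 * frob w ^ 2 := by
    rw [frob_sq, frob_sq, rinner_self_mul_conjTranspose_add hz (isHorizontal_iff.mp hw)]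
    linarith [rinner_conjTranspose_mul_self_le hz w]
  refine (aHat_le_of_isHorizontal A hw hw0).trans ?_
  rw [analysisRatio, mul_div_assoc',
    div_le_div_iff₀ (pow_pos (frob_pos hw0) 2) (pow_pos (frob_pos hΔ) 2)]
  calc _ ≤ (∑ j, rinner (z * wᴴ + w * zᴴ) (A j) ^ 2) * (4 * frob w ^ 2) :=
        mul_le_mul_of_nonneg_left hnorm (by positivity)
    _ = _ := by ring

lemma aGlobal_le_half_of_isHorizontal {z w : Matrix (Fin n) (Fin r) ℂ} (hz : zᴴ * z = 1)
    (hw : IsHorizontal z w) (hw1 : frob w = 1) :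
    aGlobal r A ≤ (∑ j, rinner (z * wᴴ + w * zᴴ) (A j) ^ 2) / 2 := by
  have hnorm : 2 ≤ frob (z * wᴴ + w * zᴴ) ^ 2 := by
    rw [frob_sq, rinner_self_mul_conjTranspose_add hz (isHorizontal_iff.mp hw), ← frob_sq w, hw1]
    linarith [rinner_self_nonneg (zᴴ * w)]
  have hΔ : z * wᴴ + w * zᴴ ≠ 0 := by rintro h; norm_num [h, frob] at hnorm
  let f : ℝ → Matrix (Fin n) (Fin n) ℂ := fun t => z * wᴴ + w * zᴴ + t • (w * wᴴ)
  have hf (t : ℝ) : (z + t • w) * (z + t • w)ᴴ - z * zᴴ = t • f t := by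
    simp only [f, conjTranspose_add, conjTranspose_smul, star_trivial, Matrix.add_mul,
      Matrix.mul_add, Matrix.smul_mul, Matrix.mul_smul, smul_add, smul_smul]
    module
  have hlim : aGlobal r A ≤ analysisRatio A (f 0) := by
    refine le_analysisRatio_of_eventually A (by fun_prop) (by simpa [f] using hΔ) ?_
    filter_upwards [self_mem_nhdsWithin] with t (ht : t ≠ 0) hft
    have hne : (z + t • w) * (z + t • w)ᴴ ≠ z * zᴴ :=
      sub_ne_zero.mp (by rw [hf]; exact smul_ne_zero ht hft)
    simpa only [hf, analysisRatio_smul A ht] using aGlobal_le_analysisRatio A hne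
  refine hlim.trans ?_
  simp only [f, zero_smul, add_zero, analysisRatio]
  exact div_le_div_of_nonneg_left (by positivity) two_pos hnorm

end AHat

section Perturbation
variable {n r : ℕ}

open scoped MatrixOrder in
lemma exists_isometry_mul_eq_of_injective {u : Matrix (Fin n) (Fin r) ℂ}
    (hu : Function.Injective u.mulVec) :
    ∃ (z : Matrix (Fin n) (Fin r) ℂ) (S : Matrix (Fin r) (Fin r) ℂ), zᴴ * z = 1 ∧ u = z * S := by
  have hpos := PosDef.conjTranspose_mul_self u hu
  set S := CFC.sqrt (uᴴ * u)
  have hSS : S * S = uᴴ * u := CFC.sqrt_mul_sqrt_self _ hpos.posSemidef.nonneg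
  have hS : Sᴴ = S := (CFC.sqrt_nonneg (uᴴ * u)).isSelfAdjoint
  have hSdet : IsUnit S.det := isUnit_of_mul_isUnit_left <| by
    rw [← det_mul, hSS]; exact (isUnit_iff_isUnit_det _).mp hpos.isUnit
  refine ⟨u * S⁻¹, S, ?_, by rw [Matrix.mul_assoc, nonsing_inv_mul _ hSdet, Matrix.mul_one]⟩
  rw [conjTranspose_mul, conjTranspose_nonsing_inv, hS, Matrix.mul_assoc, ← Matrix.mul_assoc uᴴ,
    ← hSS, Matrix.mul_assoc, mul_nonsing_inv _ hSdet, Matrix.mul_one, nonsing_inv_mul _ hSdet]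

def coordIsometry (hrn : r ≤ n) : Matrix (Fin n) (Fin r) ℂ :=
  (1 : Matrix (Fin n) (Fin n) ℂ).submatrix id (Fin.castLE hrn)

lemma conjTranspose_coordIsometry_mul_self (hrn : r ≤ n) :
    (coordIsometry hrn)ᴴ * coordIsometry hrn = 1 := by
  rw [coordIsometry, conjTranspose_submatrix, conjTranspose_one,
    ← submatrix_mul _ _ _ _ _ Function.bijective_id, Matrix.one_mul,
    submatrix_one _ (Fin.castLE_injective hrn)]

lemma eventually_injective_mulVec_add_smul (hrn : r ≤ n) (u : Matrix (Fin n) (Fin r) ℂ) :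
    ∀ᶠ t : ℝ in 𝓝[≠] 0, Function.Injective (u + t • coordIsometry hrn).mulVec := by
  set E := coordIsometry hrn
  -- `det (E* (u + t E)) = det (t - (-E* u))` vanishes only at roots of a characteristic polynomial
  have hfin : {t : ℝ | (-(Eᴴ * u)).charpoly.eval (t : ℂ) = 0}.Finite :=
    (Polynomial.finite_setOfPred_isRoot (charpoly_monic _).ne_zero).preimage
      Complex.ofReal_injective.injOn
  filter_upwards [nhdsNE_le_cofinite 0 hfin.eventually_cofinite_notMem] with t ht
  have hunit : IsUnit (Eᴴ * (u + t • E)) := by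
    rw [isUnit_iff_isUnit_det, isUnit_iff_ne_zero]
    convert ht using 1
    rw [eval_charpoly, Matrix.mul_add, Matrix.mul_smul, conjTranspose_coordIsometry_mul_self,
      sub_neg_eq_add, add_comm]
    congr 2
    ext i j
    simp [one_apply, diagonal_apply]
  refine .of_comp (f := Eᴴ.mulVec) ?_
  rwa [show Eᴴ.mulVec ∘ (u + t • E).mulVec = (Eᴴ * (u + t • E)).mulVec from
    funext fun v => mulVec_mulVec v _ _, mulVec_injective_iff_isUnit]

end Perturbation

section Bounds
variable {n r m : ℕ} (A : Fin m → Matrix (Fin n) (Fin n) ℂ)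

lemma sInf_aHat_div_four_le_analysisRatio (hrn : r ≤ n) {x y : Matrix (Fin n) (Fin r) ℂ}
    (hxy : x * xᴴ ≠ y * yᴴ) :
    sInf {t : ℝ | ∃ z : Matrix (Fin n) (Fin r) ℂ, zᴴ * z = 1 ∧ t = aHat A z} / 4
      ≤ analysisRatio A (x * xᴴ - y * yᴴ) := by
  set E := coordIsometry hrn
  let f : ℝ → Matrix (Fin n) (Fin n) ℂ := fun t => (x + t • E) * (x + t • E)ᴴ - y * yᴴ
  have hf0 : f 0 = x * xᴴ - y * yᴴ := by simp [f]
  rw [← hf0]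
  refine le_analysisRatio_of_eventually A (by fun_prop) (hf0 ▸ sub_ne_zero.mpr hxy) ?_
  filter_upwards [eventually_injective_mulVec_add_smul hrn (x - y)] with t hinj hft
  -- `2 f t = u v* + v u*` with `u = x + t E - y` injective and `v = x + t E + y`
  obtain ⟨z, S, hz, hu⟩ := exists_isometry_mul_eq_of_injective hinj
  obtain ⟨w, hw, hzw⟩ := exists_isHorizontal_mul_conjTranspose_add hz ((x + t • E + y) * Sᴴ)
  have hrep : z * wᴴ + w * zᴴ = (2 : ℝ) • f t := by
    rw [hzw, conjTranspose_mul, conjTranspose_conjTranspose, ← Matrix.mul_assoc,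
      Matrix.mul_assoc _ Sᴴ, ← conjTranspose_mul, ← hu]
    simp only [f, conjTranspose_add, conjTranspose_sub, conjTranspose_smul, star_trivial,
      Matrix.add_mul, Matrix.mul_add, Matrix.sub_mul, Matrix.mul_sub, Matrix.smul_mul,
      Matrix.mul_smul, smul_sub, smul_add]
    module
  have hle := aHat_le_four_mul_analysisRatio A hz hw (hrep ▸ smul_ne_zero two_ne_zero hft)
  rw [hrep, analysisRatio_smul A two_ne_zero] at hle
  linarith [sInf_aHat_le A hz]

lemma sInf_aHat_le_four_mul_aGlobal (hrn : r ≤ n) (hr : 0 < r) :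
    sInf {t : ℝ | ∃ z : Matrix (Fin n) (Fin r) ℂ, zᴴ * z = 1 ∧ t = aHat A z}
      ≤ 4 * aGlobal r A := by
  have : Nonempty (Fin r) := ⟨⟨0, hr⟩⟩
  have hE : coordIsometry hrn ≠ 0 := fun h =>
    (one_ne_zero : (1 : Matrix (Fin r) (Fin r) ℂ) ≠ 0) <| by
      simpa [h] using (conjTranspose_coordIsometry_mul_self hrn).symm
  have hne : coordIsometry hrn * (coordIsometry hrn)ᴴ ≠ 0 := by
    rwa [Ne, self_mul_conjTranspose_eq_zero]
  have hlow : sInf {t : ℝ | ∃ z : Matrix (Fin n) (Fin r) ℂ, zᴴ * z = 1 ∧ t = aHat A z} / 4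
      ≤ aGlobal r A := by
    refine le_csInf ⟨_, coordIsometry hrn, 0, by simpa using hne, rfl⟩ ?_
    rintro _ ⟨x, y, hxy, rfl⟩
    exact sInf_aHat_div_four_le_analysisRatio A hrn hxy
  linarith

lemma two_mul_aGlobal_le_sInf_aHat (hrn : r ≤ n) (hr : 0 < r) :
    2 * aGlobal r A
      ≤ sInf {t : ℝ | ∃ z : Matrix (Fin n) (Fin r) ℂ, zᴴ * z = 1 ∧ t = aHat A z} := by
  refine le_csInf ⟨_, _, conjTranspose_coordIsometry_mul_self hrn, rfl⟩ ?_
  rintro _ ⟨z, hz, rfl⟩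
  have hz1 : frob ((√(r : ℝ))⁻¹ • z) = 1 := by
    rw [frob_smul, abs_of_pos (by positivity), frob, hz, trace_one]
    simp [hr.ne']
  rw [aHat]
  refine le_csInf ⟨_, _, (isHorizontal_iff.mpr (hz ▸ isHermitian_one)).smul _, hz1, rfl⟩ ?_
  rintro _ ⟨w, hw, hw1, rfl⟩
  linarith [aGlobal_le_half_of_isHorizontal A hz hw hw1]

lemma aGlobal_zero : aGlobal 0 A = 0 := by
  rw [aGlobal]
  convert Real.sInf_empty
  ext t
  simp

lemma aHat_fin_zero (z : Matrix (Fin n) (Fin 0) ℂ) : aHat A z = 0 := by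
  rw [aHat]
  convert Real.sInf_empty
  ext t
  simp [frob, rinner]

end Bounds

theorem a0_between_aHat_infs_general (n r m : ℕ) (hrn : r ≤ n)
    (A : Fin m → Matrix (Fin n) (Fin n) ℂ) :
    (1 / 4) * sInf {t : ℝ | ∃ z : Matrix (Fin n) (Fin r) ℂ, zᴴ * z = 1 ∧ t = aHat A z}
      ≤ aGlobal r A ∧
    aGlobal r A ≤
      (1 / 2) * sInf {t : ℝ | ∃ z : Matrix (Fin n) (Fin r) ℂ, zᴴ * z = 1 ∧ t = aHat A z} := by
  obtain rfl | hr := Nat.eq_zero_or_pos r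
  · have hinf : sInf {t : ℝ | ∃ z : Matrix (Fin n) (Fin 0) ℂ, zᴴ * z = 1 ∧ t = aHat A z} = 0 :=
      le_antisymm (Real.sInf_nonpos fun _ ⟨z, _, ht⟩ => (ht.trans (aHat_fin_zero A z)).le)
        (Real.sInf_nonneg fun _ ⟨z, _, ht⟩ => (ht.trans (aHat_fin_zero A z)).ge)
    rw [hinf, aGlobal_zero]
    norm_num
  · exact ⟨by linarith [sInf_aHat_le_four_mul_aGlobal A hrn hr],
      by linarith [two_mul_aGlobal_le_sInf_aHat A hrn hr]⟩

/-- `(1/4) inf {â(z) : z* z = I_r} ≤ a₀ ≤ (1/2) inf {â(z) : z* z = I_r}`. -/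
theorem a0_between_aHat_infs (n r m : ℕ) (hrn : r ≤ n)
    (A : Fin m → Matrix (Fin n) (Fin n) ℂ) (hA : ∀ j, (A j).IsHermitian) :
    (1 / 4) * sInf {t : ℝ | ∃ z : Matrix (Fin n) (Fin r) ℂ, zᴴ * z = 1 ∧ t = aHat A z}
      ≤ aGlobal r A ∧
    aGlobal r A ≤
      (1 / 2) * sInf {t : ℝ | ∃ z : Matrix (Fin n) (Fin r) ℂ, zᴴ * z = 1 ∧ t = aHat A z} :=
  a0_between_aHat_infs_general n r m hrn A
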